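/- Let (β,ι) be a nice pair consisting of a braid word β on n strands and an inversion datum ι on β. Then the ground state s₀ is a valid state, and every valid state s ≠ s₀ satisfies d_x(s) > d_x(s₀); in particular, s₀ is the unique minimizer of the x-degree d_x on the set Ω(β,ι) of valid states. (Hence the ground state is the only state contributing to the leading term of the inverted state sum.) -/

import Mathlib

/-- A braid word on `n` strands with `m` letters. Strand positions are 0-indexed:
the index `p : Fin n` represents the mathematical position `p+1 ∈ {1,…,n}`.
The `t`-th letter is a crossing of sign `ε t` involving the strand positions
`k t` and `k t + 1` (i.e. mathematical positions `k t + 1` and `k t + 2`). -/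
structure BraidWord (n m : ℕ) where
  k : Fin m → ℕ
  hk : ∀ t, k t + 1 < n
  ε : Fin m → ℤ
  hε : ∀ t, ε t = 1 ∨ ε t = -1

namespace BraidWord

variable {n m : ℕ}

/-- Segments of the closed braid diagram: `(p, t)` is the segment at horizontal
position `p` (0-indexed) and level `t` (mod `m`); the `t`-th letter has its bottom
at level `t` and its top at level `t+1`, and `(p, 0)` is the `p`-th closure segment. -/
abbrev Seg (n m : ℕ) := Fin n × Fin m

/-- Segment adjacent to the `t`-th crossing at the bottom left. -/
def eBL (β : BraidWord n m) (t : Fin m) : Seg n m :=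
  (⟨β.k t, by have := β.hk t; omega⟩, t)

/-- Segment adjacent to the `t`-th crossing at the bottom right. -/
def eBR (β : BraidWord n m) (t : Fin m) : Seg n m :=
  (⟨β.k t + 1, β.hk t⟩, t)

/-- Segment adjacent to the `t`-th crossing at the top left. -/
def eTL [NeZero m] (β : BraidWord n m) (t : Fin m) : Seg n m :=
  (⟨β.k t, by have := β.hk t; omega⟩, t + 1)

/-- Segment adjacent to the `t`-th crossing at the top right. -/
def eTR [NeZero m] (β : BraidWord n m) (t : Fin m) : Seg n m :=
  (⟨β.k t + 1, β.hk t⟩, t + 1)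

/-- The writhe of a braid word: the sum of the signs of its crossings. -/
def writhe (β : BraidWord n m) : ℤ := ∑ t, β.ε t

/-- The allowed sign patterns `(BL, BR, TL, TR)` around a crossing of sign `e`. -/
def allowedQuad (e a b c d : ℤ) : Prop :=
  if e = 1 then
    (a = 1 ∧ b = -1 ∧ c = -1 ∧ d = 1) ∨ (a = -1 ∧ b = 1 ∧ c = 1 ∧ d = -1) ∨
    (a = -1 ∧ b = -1 ∧ c = -1 ∧ d = -1) ∨ (a = -1 ∧ b = 1 ∧ c = -1 ∧ d = 1) ∨
    (a = 1 ∧ b = 1 ∧ c = 1 ∧ d = 1)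
  else
    (a = 1 ∧ b = -1 ∧ c = -1 ∧ d = 1) ∨ (a = -1 ∧ b = 1 ∧ c = 1 ∧ d = -1) ∨
    (a = -1 ∧ b = -1 ∧ c = -1 ∧ d = -1) ∨ (a = 1 ∧ b = -1 ∧ c = 1 ∧ d = -1) ∨
    (a = 1 ∧ b = 1 ∧ c = 1 ∧ d = 1)

/-- An inversion datum on a braid word: a `±1`-assignment to each segment,
constant along strands away from crossings, with allowed patterns at crossings. -/
def IsInvDatum [NeZero m] (β : BraidWord n m) (ι : Seg n m → ℤ) : Prop :=
  (∀ e : Seg n m, ι e = 1 ∨ ι e = -1) ∧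
  (∀ (p : Fin n) (t : Fin m), p.val ≠ β.k t → p.val ≠ β.k t + 1 → ι (p, t) = ι (p, t + 1)) ∧
  (∀ t : Fin m, allowedQuad (β.ε t) (ι (β.eBL t)) (ι (β.eBR t)) (ι (β.eTL t)) (ι (β.eTR t)))

/-- A state on a braid word: an integer assignment to each segment, constant along
strands away from crossings, conserved at each crossing. -/
def IsState [NeZero m] (β : BraidWord n m) (s : Seg n m → ℤ) : Prop :=
  (∀ (p : Fin n) (t : Fin m), p.val ≠ β.k t → p.val ≠ β.k t + 1 → s (p, t) = s (p, t + 1)) ∧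
  (∀ t : Fin m, s (β.eBL t) + s (β.eBR t) = s (β.eTL t) + s (β.eTR t))

/-- The sign of an integer, with the convention that the sign of `0` is `+1`. -/
def isign (a : ℤ) : ℤ := if 0 ≤ a then 1 else -1

/-- A state is valid for an inversion datum `ι` if its signs agree with `ι` and the
inequalities required for the extended `R`-matrix to be nonzero hold at each crossing. -/
def IsValid [NeZero m] (β : BraidWord n m) (ι s : Seg n m → ℤ) : Prop :=
  β.IsState s ∧ (∀ e : Seg n m, isign (s e) = ι e) ∧
  ∀ t : Fin m,
    if β.ε t = 1 then s (β.eTR t) ≤ s (β.eBL t) ∨ (0 ≤ s (β.eTR t) ∧ s (β.eBL t) < 0)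
    else s (β.eTL t) ≤ s (β.eBR t) ∨ (0 ≤ s (β.eTL t) ∧ s (β.eBR t) < 0)

/-- The ground state associated to an inversion datum: `s₀(e) = (ι(e) - 1)/2 ∈ {0, -1}`. -/
def groundState (ι : Seg n m → ℤ) : Seg n m → ℤ := fun e => (ι e - 1) / 2

/-- The (minimal) x-degree of a state:
`d_x(s) = -(n-1)/2 + ∑_t ε_t (s(e_BR(t)) + s(e_TR(t)) + 1)/2`. -/
def xdeg [NeZero m] (β : BraidWord n m) (s : Seg n m → ℤ) : ℚ :=
  -((n : ℚ) - 1) / 2 +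
    ∑ t : Fin m, (β.ε t : ℚ) * (((s (β.eBR t) : ℚ) + (s (β.eTR t) : ℚ) + 1) / 2)

/-- A pair (braid word, inversion datum) is nice if every valid state has nonnegative
x-degree and only finitely many valid states have x-degree below any given bound. -/
def IsNice [NeZero m] (β : BraidWord n m) (ι : Seg n m → ℤ) : Prop :=
  (∀ s, β.IsValid ι s → 0 ≤ β.xdeg s) ∧
  ∀ M : ℝ, {s : Seg n m → ℤ | β.IsValid ι s ∧ ((β.xdeg s : ℚ) : ℝ) ≤ M}.Finite

/-- The invariant `ℓ(β,ι) = -∑_{p=2}^{n} ι(b_p)/2 + ∑_t ε_t (1 + ι(e_BR(t))·ι(e_TR(t)))/4`. -/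
def ell [NeZero m] (β : BraidWord n m) (ι : Seg n m → ℤ) : ℚ :=
  -(∑ p : Fin n, if p.val = 0 then 0 else (ι (p, 0) : ℚ)) / 2 +
    ∑ t : Fin m, (β.ε t : ℚ) * ((1 + (ι (β.eBR t) : ℚ) * (ι (β.eTR t) : ℚ)) / 4)

end BraidWord

/-! The valid states form a cone with apex the ground state `s₀`. Since `s₀` takes values in
`{0, -1}` and every valid state has the same signs as `s₀`, moving away from `s₀` along
`s₀ + c • (s - s₀)`, `c : ℕ`, preserves the signs and the crossing inequalities, so the whole ray
consists of valid states. The x-degree is affine along the ray; hence a valid `s ≠ s₀` with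
`d_x(s) ≤ d_x(s₀)` would give infinitely many valid states of x-degree at most `d_x(s₀)`,
contradicting niceness. -/

namespace BraidWord

variable {n m : ℕ}

lemma isign_eq_one_iff {a : ℤ} : isign a = 1 ↔ 0 ≤ a := by
  unfold isign; by_cases h : 0 ≤ a <;> simp [h]

lemma isign_eq_neg_one_iff {a : ℤ} : isign a = -1 ↔ a < 0 := by
  unfold isign; by_cases h : 0 ≤ a <;> simp [h]
  omega

lemma isign_add_mul_sub {g a : ℤ} (hg : g = 0 ∨ g = -1) (ha : isign a = isign g) (c : ℕ) :
    isign (g + c * (a - g)) = isign g := by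
  have hc : (0 : ℤ) ≤ c := c.cast_nonneg
  rcases hg with rfl | rfl
  · have : 0 ≤ a := isign_eq_one_iff.1 ha
    rw [isign_eq_one_iff.2 (by positivity), isign_eq_one_iff.2 le_rfl]
  · have : a < 0 := isign_eq_neg_one_iff.1 ha
    rw [isign_eq_neg_one_iff.2 (by nlinarith), isign_eq_neg_one_iff.2 (by norm_num)]

lemma crossingIneq_add_mul_sub {ga gb a b : ℤ} (hga : ga = 0 ∨ ga = -1) (hgb : gb = 0 ∨ gb = -1)
    (ha : isign a = isign ga) (hb : isign b = isign gb) (h : b ≤ a ∨ (0 ≤ b ∧ a < 0)) (c : ℕ) :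
    gb + c * (b - gb) ≤ ga + c * (a - ga) ∨ (0 ≤ gb + c * (b - gb) ∧ ga + c * (a - ga) < 0) := by
  have hc : (0 : ℤ) ≤ c := c.cast_nonneg
  rcases hga with rfl | rfl <;> rcases hgb with rfl | rfl
  · have : 0 ≤ a := isign_eq_one_iff.1 ha
    left; nlinarith [h.resolve_right (by omega)]
  · have : 0 ≤ a := isign_eq_one_iff.1 ha
    have : b < 0 := isign_eq_neg_one_iff.1 hb
    left; nlinarith
  · have : a < 0 := isign_eq_neg_one_iff.1 ha
    have : 0 ≤ b := isign_eq_one_iff.1 hb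
    right; constructor <;> nlinarith
  · have : b < 0 := isign_eq_neg_one_iff.1 hb
    left; nlinarith [h.resolve_right (by omega)]

lemma allowedQuad.add_eq {e a b c d : ℤ} (h : allowedQuad e a b c d) : a + b = c + d := by
  unfold allowedQuad at h; split_ifs at h <;> omega

section States

variable [NeZero m] {β : BraidWord n m} {ι a s : Seg n m → ℤ}

lemma IsState.add (ha : β.IsState a) (hs : β.IsState s) : β.IsState (a + s) :=
  ⟨fun p t hp hp' => by simp only [Pi.add_apply, ha.1 p t hp hp', hs.1 p t hp hp'],
    fun t => by simp only [Pi.add_apply]; linarith [ha.2 t, hs.2 t]⟩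

lemma IsState.sub (ha : β.IsState a) (hs : β.IsState s) : β.IsState (a - s) :=
  ⟨fun p t hp hp' => by simp only [Pi.sub_apply, ha.1 p t hp hp', hs.1 p t hp hp'],
    fun t => by simp only [Pi.sub_apply]; linarith [ha.2 t, hs.2 t]⟩

lemma IsState.smul (hs : β.IsState s) (c : ℤ) : β.IsState (c • s) :=
  ⟨fun p t hp hp' => by simp only [Pi.smul_apply, hs.1 p t hp hp'],
    fun t => by simp only [Pi.smul_apply, smul_eq_mul]; rw [← mul_add, ← mul_add, hs.2 t]⟩

omit [NeZero m] in
lemma groundState_eq_zero_or_neg_one (hι : ∀ e, ι e = 1 ∨ ι e = -1) (e : Seg n m) :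
    groundState ι e = 0 ∨ groundState ι e = -1 := by
  unfold groundState; rcases hι e with h | h <;> rw [h] <;> norm_num

lemma isValid_groundState (hι : β.IsInvDatum ι) : β.IsValid ι (groundState ι) := by
  obtain ⟨hpm, hstrand, hquad⟩ := hι
  have h01 := groundState_eq_zero_or_neg_one hpm
  refine ⟨⟨fun p t hp hp' => by simp only [groundState, hstrand p t hp hp'], fun t => ?_⟩,
    fun e => ?_, fun t => ?_⟩
  · have := (hquad t).add_eq
    simp only [groundState]
    rcases hpm (β.eBL t) with _ | _ <;> rcases hpm (β.eBR t) with _ | _ <;>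
      rcases hpm (β.eTL t) with _ | _ <;> rcases hpm (β.eTR t) with _ | _ <;> omega
  · unfold groundState; rcases hpm e with h | h <;> rw [h] <;> rfl
  · -- a `{0, -1}`-valued state satisfies every crossing inequality
    split_ifs
    · rcases h01 (β.eBL t) with _ | _ <;> rcases h01 (β.eTR t) with _ | _ <;> omega
    · rcases h01 (β.eBR t) with _ | _ <;> rcases h01 (β.eTL t) with _ | _ <;> omega

lemma IsValid.add_smul_sub (ha : β.IsValid ι a) (ha01 : ∀ e, a e = 0 ∨ a e = -1)
    (hs : β.IsValid ι s) (c : ℕ) : β.IsValid ι (a + (c : ℤ) • (s - a)) := by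
  have hsign (e : Seg n m) : isign (s e) = isign (a e) := (hs.2.1 e).trans (ha.2.1 e).symm
  refine ⟨ha.1.add ((hs.1.sub ha.1).smul c), fun e => ?_, fun t => ?_⟩
  · rw [← ha.2.1 e]
    exact isign_add_mul_sub (ha01 e) (hsign e) c
  · have hst := hs.2.2 t
    simp only [Pi.add_apply, Pi.smul_apply, Pi.sub_apply, smul_eq_mul]
    split_ifs at hst ⊢ <;>
      exact crossingIneq_add_mul_sub (ha01 _) (ha01 _) (hsign _) (hsign _) hst c

lemma xdeg_add_smul_sub (c : ℤ) :
    β.xdeg (a + c • (s - a)) = β.xdeg a + c * (β.xdeg s - β.xdeg a) := by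
  simp only [xdeg, Pi.add_apply, Pi.smul_apply, Pi.sub_apply, smul_eq_mul, Int.cast_add,
    Int.cast_mul, Int.cast_sub, add_sub_add_left_eq_sub, ← Finset.sum_sub_distrib, Finset.mul_sum,
    add_assoc, ← Finset.sum_add_distrib]
  congr 2 with t
  ring

lemma IsNice.xdeg_lt (hnice : β.IsNice ι) (ha : β.IsValid ι a) (ha01 : ∀ e, a e = 0 ∨ a e = -1)
    (hs : β.IsValid ι s) (hne : s ≠ a) : β.xdeg a < β.xdeg s := by
  by_contra! hle
  have hray : Function.Injective fun c : ℕ => a + (c : ℤ) • (s - a) :=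
    (add_right_injective a).comp ((smul_left_injective ℤ (sub_ne_zero.2 hne)).comp
      Nat.cast_injective)
  refine Set.infinite_of_injective_forall_mem hray (fun c => ?_) (hnice.2 (β.xdeg a))
  refine ⟨ha.add_smul_sub ha01 hs c, ?_⟩
  rw [xdeg_add_smul_sub, Rat.cast_le]
  have : ((c : ℤ) : ℚ) * (β.xdeg s - β.xdeg a) ≤ 0 :=
    mul_nonpos_of_nonneg_of_nonpos (by positivity) (sub_nonpos.2 hle)
  linarith

end States

end BraidWord

theorem ground_state_unique_minimizer (n m : ℕ) [NeZero m] (β : BraidWord n m)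
    (ι : BraidWord.Seg n m → ℤ) (hι : β.IsInvDatum ι) (hnice : β.IsNice ι) :
    β.IsValid ι (BraidWord.groundState ι) ∧
    ∀ s : BraidWord.Seg n m → ℤ, β.IsValid ι s → s ≠ BraidWord.groundState ι →
      β.xdeg (BraidWord.groundState ι) < β.xdeg s :=
  ⟨BraidWord.isValid_groundState hι, fun _ hs hne =>
    hnice.xdeg_lt (BraidWord.isValid_groundState hι)
      (BraidWord.groundState_eq_zero_or_neg_one hι.1) hs hne⟩
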